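/- Let cps be a constrained path schema over a finite alphabet Σ with segments p_1, …, p_k ∈ Σ*, loops l_1, …, l_k ∈ Σ^+ and constraint set D ⊆ ℕ^{k−1}, where D is presented in semilinear form by a finite set of base vectors B0 and period vectors P_1, …, P_α, all of whose components are at most M. Let B be a Büchi automaton over Σ with state set Q. Then L(cps) ∩ L(B) ≠ ∅ if and only if there exists y ∈ D with y_i ≤ M + 2·|Q|^k·α·M for every i ∈ {1,…,k−1} such that p_1 l_1^{y_1} ⋯ p_{k−1} l_{k−1}^{y_{k−1}} p_k l_k^ω ∈ L(B). -/

import Mathlib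

/-!
An accepting run on `p₁ l₁^{y₁} ⋯ p_k l_k^ω` fixes, for each loop `lᵢ` with `i < k`, the states in which
it enters and leaves the block `l_i^{y_i}`, and every other exponent vector whose blocks connect
the same states is accepted as well. Write `y = b + ∑ⱼ aⱼ Pⱼ`. Reading one copy of `Pⱼ` in all
loops simultaneously is one step of a relation on `Q^{k-1}`, so the `aⱼ` copies form a walk of
length `aⱼ` there, and by pigeonhole such a walk can be shortened to fewer than `|Q|^{k-1}`
steps. Hence each `aⱼ` may be taken below `|Q|^{k-1}`, which bounds every `yᵢ` by
`M + α |Q|^{k-1} M`.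
-/

namespace Stmt6

variable {Γ : Type*}

/-- `m`-fold concatenation of a finite word. -/
def lpow (u : List Γ) : ℕ → List Γ
  | 0 => []
  | m + 1 => u ++ lpow u m

/-- Concatenation of a finite word with an ω-word. -/
def wcat (u : List Γ) (w : ℕ → Γ) : ℕ → Γ := fun n =>
  if h : n < u.length then u.get ⟨n, h⟩ else w (n - u.length)

/-- Infinite repetition of a nonempty finite word. -/
def womega (u : List Γ) (hu : u ≠ []) : ℕ → Γ := fun n =>
  u.get ⟨n % u.length, Nat.mod_lt _ (List.length_pos_iff.mpr hu)⟩

/-- The finite word `p 0 · (l 0)^(n 0) · ⋯ · p (i-1) · (l (i-1))^(n (i-1))`. -/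
def schemaPrefix (p l : ℕ → List Γ) (n : ℕ → ℕ) : ℕ → List Γ
  | 0 => []
  | i + 1 => schemaPrefix p l n i ++ (p i ++ lpow (l i) (n i))

/-- The ω-word `p_1 l_1^{n_1} ⋯ p_{k-1} l_{k-1}^{n_{k-1}} p_k l_k^ω`
(with `0`-based indexing of the segments `p` and loops `l`). -/
def schemaWord (k : ℕ) (p l : ℕ → List Γ) (n : ℕ → ℕ) (h : l (k - 1) ≠ []) : ℕ → Γ :=
  wcat (schemaPrefix p l n (k - 1) ++ p (k - 1)) (womega (l (k - 1)) h)

/-- Extension of a vector in `ℕ^d` to a function on all of `ℕ` (by `0`). -/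
def extFun {d : ℕ} (n : Fin d → ℕ) : ℕ → ℕ := fun i => if h : i < d then n ⟨i, h⟩ else 0

/-- The language of the constrained path schema with segments `p`, loops `l`
and constraint set `D ⊆ ℕ^(k-1)`. -/
def cpsLang (k : ℕ) (p l : ℕ → List Γ) (D : Set (Fin (k - 1) → ℕ))
    (h : l (k - 1) ≠ []) : Set (ℕ → Γ) :=
  {w | ∃ n ∈ D, w = schemaWord k p l (extFun n) h}

/-- A Büchi automaton with states `Q` and alphabet `Γ`. -/
structure Buchi (Q Γ : Type*) where
  init : Q
  trans : Set (Q × Γ × Q)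
  acc : Set Q

/-- `B` accepts the ω-word `w`. -/
def Buchi.Accepts {Q Γ : Type*} (B : Buchi Q Γ) (w : ℕ → Γ) : Prop :=
  ∃ ρ : ℕ → Q, ρ 0 = B.init ∧ (∀ i, (ρ i, w i, ρ (i + 1)) ∈ B.trans) ∧
    ∀ n, ∃ m, n ≤ m ∧ ρ m ∈ B.acc

section RelPow

variable {X ι : Type*} {R : X → X → Prop}

def RelPow (R : X → X → Prop) : ℕ → X → X → Prop
  | 0, x, y => x = y
  | n + 1, x, z => ∃ y, R x y ∧ RelPow R n y z

theorem relPow_add {m n : ℕ} {x z : X} :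
    RelPow R (m + n) x z ↔ ∃ y, RelPow R m x y ∧ RelPow R n y z := by
  induction m generalizing x with
  | zero => simp [RelPow]
  | succ m ih =>
    simp only [Nat.succ_add, RelPow, ih]
    aesop

theorem RelPow.exists_lt_card [Fintype X] {n : ℕ} {x y : X} (h : RelPow R n x y) :
    ∃ m < Fintype.card X, RelPow R m x y := by
  induction n using Nat.strong_induction_on with
  | _ n ih =>
  by_cases hn : n < Fintype.card X
  · exact ⟨n, hn, h⟩
  have hsplit (t : Fin (n + 1)) : ∃ z, RelPow R t x z ∧ RelPow R (n - t) z y :=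
    relPow_add.mp (by rwa [Nat.add_sub_cancel' (Nat.lt_succ_iff.mp t.isLt)])
  choose z hxz hzy using hsplit
  obtain ⟨t, t', hne, heq⟩ := Fintype.exists_ne_map_eq_of_card_lt z (by rw [Fintype.card_fin]; omega)
  wlog hlt : t < t' generalizing t t'
  · exact this t' t hne.symm heq.symm (lt_of_le_of_ne (not_lt.mp hlt) hne.symm)
  exact ih (t + (n - t')) (by omega) (relPow_add.mpr ⟨z t, hxz t, heq ▸ hzy t'⟩)

def PiRelPow (L : ι → X → X → Prop) (n : ι → ℕ) (x y : ι → X) : Prop :=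
  ∀ i, RelPow (L i) (n i) (x i) (y i)

theorem piRelPow_add {L : ι → X → X → Prop} {m n : ι → ℕ} {x z : ι → X} :
    PiRelPow L (m + n) x z ↔ ∃ y, PiRelPow L m x y ∧ PiRelPow L n y z := by
  constructor
  · intro h
    choose y hxy hyz using fun i => relPow_add.mp (h i)
    exact ⟨y, hxy, hyz⟩
  · rintro ⟨y, hxy, hyz⟩ i
    exact relPow_add.mpr ⟨y i, hxy i, hyz i⟩

theorem piRelPow_smul {L : ι → X → X → Prop} {c : ℕ} {n : ι → ℕ} {x y : ι → X} :
    PiRelPow L (c • n) x y ↔ RelPow (PiRelPow L n) c x y := by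
  induction c generalizing x with
  | zero => simp [PiRelPow, RelPow, funext_iff]
  | succ c ih => simp only [succ_nsmul', piRelPow_add, ih, RelPow]

end RelPow

theorem PiRelPow.exists_semilinear_coeff_lt {X ι : Type*} [Fintype X] [Fintype ι]
    [DecidableEq ι] {L : ι → X → X → Prop} {x y : ι → X} {α : ℕ} (b : ι → ℕ)
    (P : Fin α → ι → ℕ) (a : Fin α → ℕ) (h : PiRelPow L (b + ∑ j, a j • P j) x y) :
    ∃ a' : Fin α → ℕ, (∀ j, a' j < Fintype.card X ^ Fintype.card ι) ∧
      PiRelPow L (b + ∑ j, a' j • P j) x y := by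
  induction α generalizing b with
  | zero => exact ⟨a, fun j => j.elim0, h⟩
  | succ α ih =>
    rw [Fin.sum_univ_succ, ← add_assoc] at h
    obtain ⟨a', ha', h'⟩ := ih (b + a 0 • P 0) (fun j => P j.succ) (fun j => a j.succ) h
    rw [add_right_comm, piRelPow_add] at h'
    obtain ⟨z, hxz, hzy⟩ := h'
    obtain ⟨c, hc, hzy'⟩ := (piRelPow_smul.mp hzy).exists_lt_card
    rw [Fintype.card_fun] at hc
    refine ⟨Fin.cons c a', Fin.cases hc ha', ?_⟩
    rw [Fin.sum_univ_succ, Fin.cons_zero, add_comm (c • P 0), ← add_assoc]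
    simp only [Fin.cons_succ]
    exact piRelPow_add.mpr ⟨z, hxz, piRelPow_smul.mpr hzy'⟩

section Runs

variable {Q : Type*}

def Buchi.Path (B : Buchi Q Γ) : Q → List Γ → Q → Prop
  | q, [], r => q = r
  | q, c :: u, r => ∃ s, (q, c, s) ∈ B.trans ∧ B.Path s u r

def Buchi.AcceptsFrom (B : Buchi Q Γ) (q : Q) (w : ℕ → Γ) : Prop :=
  ∃ ρ : ℕ → Q, ρ 0 = q ∧ (∀ i, (ρ i, w i, ρ (i + 1)) ∈ B.trans) ∧
    ∀ n, ∃ m, n ≤ m ∧ ρ m ∈ B.acc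

variable {B : Buchi Q Γ}

theorem Buchi.path_append {q r : Q} {u v : List Γ} :
    B.Path q (u ++ v) r ↔ ∃ s, B.Path q u s ∧ B.Path s v r := by
  induction u generalizing q with
  | nil => simp [Buchi.Path]
  | cons c u ih =>
    simp only [List.cons_append, Buchi.Path, ih]
    aesop

theorem Buchi.path_lpow {q r : Q} {u : List Γ} {n : ℕ} :
    B.Path q (lpow u n) r ↔ RelPow (B.Path · u ·) n q r := by
  induction n generalizing q with
  | zero => rfl
  | succ n ih => simp only [lpow, Buchi.path_append, ih, RelPow]

theorem Buchi.acceptsFrom_iff_step {q : Q} {w : ℕ → Γ} :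
    B.AcceptsFrom q w ↔ ∃ s, (q, w 0, s) ∈ B.trans ∧ B.AcceptsFrom s (fun n => w (n + 1)) := by
  constructor
  · rintro ⟨ρ, rfl, hstep, hacc⟩
    refine ⟨ρ 1, hstep 0, fun n => ρ (n + 1), rfl, fun n => hstep (n + 1), fun n => ?_⟩
    obtain ⟨m, hm, hρm⟩ := hacc (n + 1)
    refine ⟨m - 1, by omega, ?_⟩
    show ρ (m - 1 + 1) ∈ B.acc
    rwa [Nat.sub_add_cancel (by omega : 1 ≤ m)]
  · rintro ⟨s, hqs, ρ, rfl, hstep, hacc⟩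
    refine ⟨fun | 0 => q | n + 1 => ρ n, rfl, fun | 0 => hqs | n + 1 => hstep n, fun n => ?_⟩
    obtain ⟨m, hm, hρm⟩ := hacc n
    exact ⟨m + 1, by omega, hρm⟩

theorem wcat_nil (w : ℕ → Γ) : wcat [] w = w := by
  ext n
  simp [wcat]

theorem wcat_cons_zero (c : Γ) (u : List Γ) (w : ℕ → Γ) : wcat (c :: u) w 0 = c := by
  simp [wcat]

theorem wcat_cons_succ (c : Γ) (u : List Γ) (w : ℕ → Γ) :
    (fun n => wcat (c :: u) w (n + 1)) = wcat u w := by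
  ext n
  by_cases hn : n < u.length <;> simp [wcat, hn]

theorem Buchi.acceptsFrom_wcat {q : Q} {u : List Γ} {w : ℕ → Γ} :
    B.AcceptsFrom q (wcat u w) ↔ ∃ r, B.Path q u r ∧ B.AcceptsFrom r w := by
  induction u generalizing q with
  | nil => simp [wcat_nil, Buchi.Path]
  | cons c u ih =>
    rw [Buchi.acceptsFrom_iff_step, wcat_cons_zero, wcat_cons_succ]
    simp only [ih, Buchi.Path]
    aesop

end Runs

section Schema

variable {Q : Type*} {B : Buchi Q Γ} {p l : ℕ → List Γ}

theorem Buchi.Path.exists_loopStates_schemaPrefix {n : ℕ → ℕ} {m : ℕ} {q r : Q}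
    (h : B.Path q (schemaPrefix p l n m) r) :
    ∃ x y : ℕ → Q, (∀ i < m, RelPow (B.Path · (l i) ·) (n i) (x i) (y i)) ∧
      ∀ n' : ℕ → ℕ, (∀ i < m, RelPow (B.Path · (l i) ·) (n' i) (x i) (y i)) →
        B.Path q (schemaPrefix p l n' m) r := by
  induction m generalizing r with
  | zero => exact ⟨fun _ => q, fun _ => q, by simp, fun _ _ => h⟩
  | succ m ih =>
    simp only [schemaPrefix, Buchi.path_append, Buchi.path_lpow] at h
    obtain ⟨s, hqs, t, hst, htr⟩ := h
    obtain ⟨x, y, hxy, hback⟩ := ih hqs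
    refine ⟨Function.update x m t, Function.update y m r, fun i hi => ?_, fun n' h' => ?_⟩
    · rcases (Nat.lt_succ_iff_lt_or_eq.mp hi) with hi | rfl
      · simpa [hi.ne] using hxy i hi
      · simpa using htr
    · have hprefix : B.Path q (schemaPrefix p l n' m) s :=
        hback n' fun i hi => by simpa [hi.ne] using h' i (by omega)
      have hloop : RelPow (B.Path · (l m) ·) (n' m) t r := by simpa using h' m (by omega)
      simp only [schemaPrefix, Buchi.path_append, Buchi.path_lpow]
      exact ⟨s, hprefix, t, hst, hloop⟩

theorem Buchi.exists_loopStates_of_accepts_schemaWord {k : ℕ} (hl : l (k - 1) ≠ [])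
    {n : Fin (k - 1) → ℕ} (h : B.Accepts (schemaWord k p l (extFun n) hl)) :
    ∃ x y : Fin (k - 1) → Q, PiRelPow (fun i : Fin (k - 1) => (B.Path · (l i) ·)) n x y ∧
      ∀ n', PiRelPow (fun i : Fin (k - 1) => (B.Path · (l i) ·)) n' x y →
        B.Accepts (schemaWord k p l (extFun n') hl) := by
  obtain ⟨r, hpath, hacc⟩ := Buchi.acceptsFrom_wcat.mp h
  obtain ⟨s, hprefix, hs⟩ := Buchi.path_append.mp hpath
  obtain ⟨x, y, hxy, hback⟩ := hprefix.exists_loopStates_schemaPrefix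
  refine ⟨fun i => x i, fun i => y i, fun i => by simpa [extFun] using hxy i i.2, fun n' h' => ?_⟩
  refine Buchi.acceptsFrom_wcat.mpr ⟨r, Buchi.path_append.mpr ⟨s, hback _ fun i hi => ?_, hs⟩, hacc⟩
  simpa [extFun, hi] using h' ⟨i, hi⟩

end Schema

theorem add_sum_mul_le {ι : Type*} {α M N : ℕ} {b : ι → ℕ} {P : Fin α → ι → ℕ}
    {a : Fin α → ℕ} (hb : ∀ i, b i ≤ M) (hP : ∀ j i, P j i ≤ M) (ha : ∀ j, a j ≤ N) (i : ι) :
    b i + ∑ j, a j * P j i ≤ M + N * α * M := by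
  have hsum : ∑ j, a j * P j i ≤ ∑ _j : Fin α, N * M :=
    Finset.sum_le_sum fun j _ => Nat.mul_le_mul (ha j) (hP j i)
  simp only [Finset.sum_const, Finset.card_univ, Fintype.card_fin, smul_eq_mul] at hsum
  nlinarith [hb i]

/-- Small-witness theorem for the intersection of a constrained path schema
(whose constraint set is presented in semilinear form with all components of
bases and periods at most `M`) with a Büchi automaton. -/
theorem cps_buchi_intersection {Q Γ : Type*} [Fintype Q]
    (B : Buchi Q Γ) (k : ℕ) (hk : 0 < k) (p l : ℕ → List Γ)
    (hl : ∀ i, i < k → l i ≠ [])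
    (D : Set (Fin (k - 1) → ℕ)) (B0 : Finset (Fin (k - 1) → ℕ)) (α : ℕ)
    (P : Fin α → Fin (k - 1) → ℕ) (M : ℕ)
    (hD : D = {y | ∃ b ∈ B0, ∃ a : Fin α → ℕ, y = fun i => b i + ∑ j, a j * P j i})
    (hB0 : ∀ b ∈ B0, ∀ i, b i ≤ M) (hP : ∀ j i, P j i ≤ M) :
    (cpsLang k p l D (hl (k - 1) (by omega)) ∩ {w | B.Accepts w}).Nonempty ↔
      ∃ y ∈ D, (∀ i, y i ≤ M + 2 * Fintype.card Q ^ k * α * M) ∧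
        B.Accepts (schemaWord k p l (extFun y) (hl (k - 1) (by omega))) := by
  refine ⟨?_, fun ⟨y, hyD, _, hacc⟩ => ⟨_, ⟨y, hyD, rfl⟩, hacc⟩⟩
  rintro ⟨_, ⟨_, hnD, rfl⟩, hacc⟩
  subst hD
  obtain ⟨b, hb, a, rfl⟩ := hnD
  have hvec (a : Fin α → ℕ) : (fun i => b i + ∑ j, a j * P j i) = b + ∑ j, a j • P j := by
    ext i
    simp [Finset.sum_apply]
  obtain ⟨x, y, hxy, hback⟩ := Buchi.exists_loopStates_of_accepts_schemaWord _ hacc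
  rw [hvec] at hxy
  obtain ⟨a', ha', hxy'⟩ := hxy.exists_semilinear_coeff_lt
  have hcoeff (j : Fin α) : a' j ≤ Fintype.card Q ^ k :=
    calc a' j ≤ Fintype.card Q ^ (k - 1) := by simpa using (ha' j).le
      _ ≤ Fintype.card Q ^ k :=
        Nat.pow_le_pow_right (Fintype.card_pos_iff.mpr ⟨B.init⟩) (Nat.sub_le k 1)
  refine ⟨_, ⟨b, hb, a', rfl⟩, fun i => ?_, hback _ (by rwa [hvec])⟩
  refine (add_sum_mul_le (hB0 b hb) hP hcoeff i).trans ?_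
  gcongr
  omega

end Stmt6
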